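/- arXiv:1502.04958 — 3 statements merged into one kernel-verified Lean document; each statement's English description precedes it below -/
import Mathlib

section
/- Non-surjectivity of the extended Fourier transform (the case k ≡ 0, a = 2 of the paper's Lemma on non-surjectivity of 𝓕_p): let N ≥ 1 and 1 < p < 2 with p' = p/(p−1). Then every continuous linear map T : L^p(ℝ^N; ℂ) → L^{p'}(ℝ^N; ℂ) which satisfies T[f] = [𝓕f] for every f ∈ L¹(ℝ^N) ∩ L^p(ℝ^N) fails to be surjective. -/
open MeasureTheory ENNReal
open Complex Real FourierTransform
open scoped Real

variable {N : ℕ}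
local notation "E" => EuclideanSpace ℝ (Fin N)

lemma norm_chirp (k : ℂ) (x : E) :
    ‖Complex.exp (-k * (‖x‖ : ℂ)^2)‖ = Real.exp (-k.re * ‖x‖^2) := by
  rw [Complex.norm_exp]
  congr 1
  simp [Complex.mul_re, ← Complex.ofReal_pow]

lemma integrable_rgauss {b : ℝ} (hb : 0 < b) :
    Integrable (fun x : E => Real.exp (-b * ‖x‖^2)) volume := by
  have h : Integrable (fun x : E => Complex.exp (-(b:ℂ) * (‖x‖:ℂ)^2)) volume := by
    simpa using GaussianFourier.integrable_cexp_neg_mul_sq_norm_add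
      (b := (b : ℂ)) (by simpa using hb) 0 (0 : E)
  have := h.norm
  refine this.congr (Filter.Eventually.of_forall fun x => ?_)
  simpa using (norm_chirp (N := N) (b : ℂ) x)

lemma eLpNorm_rgauss {b : ℝ} (hb : 0 < b) {r : ℝ} (hr : 0 < r) :
    eLpNorm (fun x : E => Real.exp (-b * ‖x‖^2)) (ENNReal.ofReal r) volume
      = ENNReal.ofReal ((π / (r * b)) ^ ((N : ℝ) / (2 * r))) := by
  rw [eLpNorm_eq_lintegral_rpow_enorm_toReal (by simpa using hr) (by simp)]
  rw [ENNReal.toReal_ofReal hr.le]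
  have h1 : ∀ x : E, (‖Real.exp (-b * ‖x‖^2)‖ₑ) ^ r
      = ENNReal.ofReal (Real.exp (-(r*b) * ‖x‖^2)) := by
    intro x
    rw [← ofReal_norm, ENNReal.ofReal_rpow_of_nonneg (norm_nonneg _) hr.le]
    congr 1
    rw [Real.norm_eq_abs, abs_of_pos (Real.exp_pos _), ← Real.exp_mul]
    ring_nf
  simp_rw [h1]
  rw [← ofReal_integral_eq_lintegral_ofReal (integrable_rgauss (by positivity))
    (Filter.Eventually.of_forall fun x => (Real.exp_pos _).le)]
  rw [show ∫ x : E, Real.exp (-(r*b) * ‖x‖^2) = (π / (r*b)) ^ ((N:ℝ)/2) by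
    simpa [finrank_euclideanSpace_fin] using
      GaussianFourier.integral_rexp_neg_mul_sq_norm (V := E) (by positivity : (0:ℝ) < r*b)]
  rw [← ENNReal.ofReal_rpow_of_nonneg (by positivity : (0:ℝ) ≤ π / (r*b)) (by positivity),
    ← ENNReal.rpow_mul, ENNReal.ofReal_rpow_of_nonneg (by positivity) (by positivity)]
  congr 1
  rw [div_mul_eq_mul_div, mul_one_div, div_div, mul_comm r 2]

lemma eLpNorm_chirp (k : ℂ) (hk : 0 < k.re) {r : ℝ} (hr : 0 < r) :
    eLpNorm (fun x : E => Complex.exp (-k * (‖x‖:ℂ)^2)) (ENNReal.ofReal r) volume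
      = ENNReal.ofReal ((π / (r * k.re)) ^ ((N : ℝ) / (2 * r))) := by
  rw [← eLpNorm_norm]
  rw [show (fun x : E => ‖Complex.exp (-k * (‖x‖:ℂ)^2)‖)
      = fun x : E => Real.exp (-k.re * ‖x‖^2) from funext fun x => norm_chirp k x]
  exact eLpNorm_rgauss hk hr

lemma continuous_chirp (k : ℂ) : Continuous (fun x : E => Complex.exp (-k * (‖x‖:ℂ)^2)) := by
  fun_prop

lemma memℒp_chirp (k : ℂ) (hk : 0 < k.re) {r : ℝ} (hr : 0 < r) :
    MemLp (fun x : E => Complex.exp (-k * (‖x‖:ℂ)^2)) (ENNReal.ofReal r) volume := by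
  refine ⟨(continuous_chirp k).aestronglyMeasurable, ?_⟩
  rw [eLpNorm_chirp k hk hr]
  exact ENNReal.ofReal_lt_top

lemma integrable_chirp (k : ℂ) (hk : 0 < k.re) :
    Integrable (fun x : E => Complex.exp (-k * (‖x‖:ℂ)^2)) volume := by
  simpa using GaussianFourier.integrable_cexp_neg_mul_sq_norm_add hk 0 (0 : E)

lemma pairing {P Q : ℝ≥0∞} (hPQ : (1:ℝ≥0∞)/1 = 1/P + 1/Q) {u v : E → ℂ}
    (hu : MemLp u P volume) (hv : MemLp v Q volume) :
    Integrable (fun x => u x * v x) volume ∧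
    ‖∫ x, u x * v x‖ ≤ (eLpNorm u P volume).toReal * (eLpNorm v Q volume).toReal := by
  haveI : ENNReal.HolderTriple P Q 1 := ⟨by simpa [one_div] using hPQ.symm⟩
  have hmem : MemLp (u • v) 1 volume := hv.smul hu
  have hint : Integrable (fun x => u x * v x) volume := by
    have := memLp_one_iff_integrable.mp hmem
    simpa [Pi.smul_apply, smul_eq_mul, Pi.mul_def] using this
  refine ⟨hint, ?_⟩
  have h1 : ‖∫ x, u x * v x‖ ≤ (eLpNorm (u • v) 1 volume).toReal := by
    rw [eLpNorm_one_eq_lintegral_enorm]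
    calc ‖∫ x, u x * v x‖ ≤ ∫ x, ‖u x * v x‖ := norm_integral_le_integral_norm _
    _ = (∫⁻ x, ‖u x * v x‖ₑ ∂volume).toReal := integral_norm_eq_lintegral_enorm hint.1
    _ = _ := rfl
  refine h1.trans ?_
  rw [← ENNReal.toReal_mul]
  apply ENNReal.toReal_mono (ENNReal.mul_ne_top hu.2.ne hv.2.ne)
  exact eLpNorm_smul_le_mul_eLpNorm hv.1 hu.1

lemma fourier_chirp (k : ℂ) (hk : 0 < k.re) (w : E) :
    𝓕 (fun x : E => Complex.exp (-k * (‖x‖:ℂ)^2)) w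
      = ((π:ℂ) / k) ^ ((N:ℂ)/2) * Complex.exp (-(π:ℂ)^2 * (‖w‖:ℂ)^2 / k) := by
  have := fourier_gaussian_innerProductSpace (V := EuclideanSpace ℝ (Fin N)) hk w
  simpa [finrank_euclideanSpace_fin] using this

lemma mult_formula {f g : E → ℂ} (hf : Integrable f volume) (hg : Integrable g volume) :
    ∫ w, 𝓕 f w * g w = ∫ x, f x * 𝓕 g x := by
  have := VectorFourier.integral_fourierIntegral_smul_eq_flip
    (L := innerₗ (EuclideanSpace ℝ (Fin N)))
    Real.continuous_fourierChar continuous_inner hf hg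
  simp [flip_innerₗ, smul_eq_mul] at this; exact this

lemma fourier_const_mul (c : ℂ) (f : E → ℂ) (w : E) :
    𝓕 (fun x : E => c * f x) w = c * 𝓕 f w := by
  have := VectorFourier.fourierIntegral_const_smul 𝐞 (volume : Measure (EuclideanSpace ℝ (Fin N)))
    (innerₗ (EuclideanSpace ℝ (Fin N))) f c
  have h2 := congrFun this w
  simp [smul_eq_mul] at h2; exact h2

lemma key_identity {P Q : ℝ≥0∞} [Fact (1 ≤ P)] [Fact (1 ≤ Q)]
    (hPQ : (1:ℝ≥0∞)/1 = 1/P + 1/Q) (hPtop : P ≠ ∞)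
    (T : Lp ℂ P (volume : Measure E) →L[ℂ] Lp ℂ Q (volume : Measure E))
    (hT : ∀ (f : E → ℂ) (hf1 : MemLp f 1 volume) (hfp : MemLp f P volume),
        ⇑(T (hfp.toLp f)) =ᵐ[volume] 𝓕 f)
    {φ : E → ℂ} (hφP : MemLp φ P volume) (hφ1 : Integrable φ volume)
    (hFφQ : MemLp (𝓕 φ) Q volume) (u : Lp ℂ P (volume : Measure E)) :
    ∫ x, (T u : E → ℂ) x * φ x = ∫ x, (u : E → ℂ) x * 𝓕 φ x := by
  have hQP : (1:ℝ≥0∞)/1 = 1/Q + 1/P := by rw [hPQ, add_comm]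
  set M : ℝ := ‖T‖ * (eLpNorm φ P volume).toReal + (eLpNorm (𝓕 φ) Q volume).toReal with hM
  have hM0 : 0 ≤ M := by positivity
  have key : ∀ ε : ℝ, 0 < ε →
      ‖(∫ x, (T u : E → ℂ) x * φ x) - ∫ x, (u : E → ℂ) x * 𝓕 φ x‖ ≤ ε * M := by
    intro ε hε
    obtain ⟨g, gsupp, hgclose, gcont, hgP⟩ :=
      (Lp.memLp u).exists_hasCompactSupport_eLpNorm_sub_le hPtop
        (ε := ENNReal.ofReal ε) (by simp [hε.not_ge])
    have hg1 : Integrable g volume := gcont.integrable_of_hasCompactSupport gsupp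
    set G := hgP.toLp g with hG
    have hTG : ⇑(T G) =ᵐ[volume] 𝓕 g := hT g (memLp_one_iff_integrable.mpr hg1) hgP
    have hsub : eLpNorm ((u : E → ℂ) - g) P volume ≤ ENNReal.ofReal ε := hgclose
    have hGu : ‖u - G‖ ≤ ε := by
      rw [Lp.norm_def]
      apply ENNReal.toReal_le_of_le_ofReal hε.le
      calc eLpNorm (⇑(u - G)) P volume
          = eLpNorm ((u : E → ℂ) - g) P volume := by
            apply eLpNorm_congr_ae
            filter_upwards [Lp.coeFn_sub u G, hgP.coeFn_toLp] with x h1 h2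
            rw [h1, Pi.sub_apply, h2, Pi.sub_apply]
        _ ≤ ENNReal.ofReal ε := hsub
    -- integrability of the four products
    have pu := pairing hQP (Lp.memLp (T u)) hφP
    have pG := pairing hQP (Lp.memLp (T G)) hφP
    have pgF := pairing hPQ hgP hFφQ
    have puF := pairing hPQ (Lp.memLp u) hFφQ
    have pD := pairing hQP (Lp.memLp (T (u - G))) hφP
    -- first piece
    have e1 : (∫ x, (T u : E → ℂ) x * φ x) - ∫ x, (T G : E → ℂ) x * φ x
        = ∫ x, (T (u - G) : E → ℂ) x * φ x := by
      rw [← integral_sub pu.1 pG.1]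
      apply integral_congr_ae
      have : ⇑(T (u - G)) =ᵐ[volume] ⇑(T u) - ⇑(T G) := by
        rw [map_sub]; exact Lp.coeFn_sub _ _
      filter_upwards [this] with x hx
      simp only [hx, Pi.sub_apply, sub_mul]
    have b1 : ‖(∫ x, (T u : E → ℂ) x * φ x) - ∫ x, (T G : E → ℂ) x * φ x‖
        ≤ ‖T‖ * ε * (eLpNorm φ P volume).toReal := by
      rw [e1]
      refine pD.2.trans ?_
      refine mul_le_mul_of_nonneg_right ?_ ENNReal.toReal_nonneg
      calc (eLpNorm (⇑(T (u - G))) Q volume).toReal = ‖T (u - G)‖ := (Lp.norm_def _).symm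
        _ ≤ ‖T‖ * ‖u - G‖ := T.le_opNorm _
        _ ≤ ‖T‖ * ε := mul_le_mul_of_nonneg_left hGu (norm_nonneg _)
    -- middle piece
    have e2 : ∫ x, (T G : E → ℂ) x * φ x = ∫ x, g x * 𝓕 φ x := by
      rw [← mult_formula hg1 hφ1]
      apply integral_congr_ae
      filter_upwards [hTG] with x hx
      rw [hx]
    -- third piece
    have b3 : ‖(∫ x, g x * 𝓕 φ x) - ∫ x, (u : E → ℂ) x * 𝓕 φ x‖
        ≤ ε * (eLpNorm (𝓕 φ) Q volume).toReal := by
      have e3 : (∫ x, g x * 𝓕 φ x) - ∫ x, (u : E → ℂ) x * 𝓕 φ x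
          = ∫ x, (g x - (u : E → ℂ) x) * 𝓕 φ x := by
        rw [← integral_sub pgF.1 puF.1]
        congr 1 with x
        ring
      rw [e3]
      have pdf := pairing hPQ (hgP.sub (Lp.memLp u)) hFφQ
      refine le_trans (by exact pdf.2) ?_
      refine mul_le_mul_of_nonneg_right ?_ ENNReal.toReal_nonneg
      apply ENNReal.toReal_le_of_le_ofReal hε.le
      calc eLpNorm (fun x => g x - (u : E → ℂ) x) P volume
          = eLpNorm ((u : E → ℂ) - g) P volume := by
            rw [← eLpNorm_neg]
            congr 1 with x
            simp [Pi.sub_apply]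
        _ ≤ ENNReal.ofReal ε := hsub
    have esum : (∫ x, (T u : E → ℂ) x * φ x) - ∫ x, (u : E → ℂ) x * 𝓕 φ x
        = ((∫ x, (T u : E → ℂ) x * φ x) - ∫ x, (T G : E → ℂ) x * φ x)
            + ((∫ x, g x * 𝓕 φ x) - ∫ x, (u : E → ℂ) x * 𝓕 φ x) := by
      rw [← e2]; ring
    calc ‖(∫ x, (T u : E → ℂ) x * φ x) - ∫ x, (u : E → ℂ) x * 𝓕 φ x‖
        = ‖((∫ x, (T u : E → ℂ) x * φ x) - ∫ x, (T G : E → ℂ) x * φ x)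
            + ((∫ x, g x * 𝓕 φ x) - ∫ x, (u : E → ℂ) x * 𝓕 φ x)‖ := by rw [esum]
        _ ≤ ‖(∫ x, (T u : E → ℂ) x * φ x) - ∫ x, (T G : E → ℂ) x * φ x‖
            + ‖(∫ x, g x * 𝓕 φ x) - ∫ x, (u : E → ℂ) x * 𝓕 φ x‖ := norm_add_le _ _
        _ ≤ ‖T‖ * ε * (eLpNorm φ P volume).toReal + ε * (eLpNorm (𝓕 φ) Q volume).toReal :=
          add_le_add b1 b3
        _ = ε * M := by rw [hM]; ring
  have hnorm : ‖(∫ x, (T u : E → ℂ) x * φ x) - ∫ x, (u : E → ℂ) x * 𝓕 φ x‖ ≤ 0 := by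
    by_contra h
    push_neg at h
    have hd := key (‖(∫ x, (T u : E → ℂ) x * φ x) - ∫ x, (u : E → ℂ) x * 𝓕 φ x‖ / (M + 1))
      (by positivity)
    set d := ‖(∫ x, (T u : E → ℂ) x * φ x) - ∫ x, (u : E → ℂ) x * 𝓕 φ x‖
    have : d / (M+1) * M < d := by
      rw [div_mul_eq_mul_div, div_lt_iff₀ (by linarith)]
      nlinarith
    linarith
  have := le_antisymm hnorm (norm_nonneg _)
  rw [norm_eq_zero, sub_eq_zero] at this
  exact this

lemma chirp_div_helper (t s : ℝ) (hs : s = 1 + t^2) (hs0 : s ≠ 0) :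
    (π:ℂ)^2 / ((π:ℂ)*(1 + t*Complex.I)) = ((π/s : ℝ):ℂ)*(1 - t*Complex.I) := by
  have hπ : (π:ℂ) ≠ 0 := by exact_mod_cast Real.pi_ne_zero
  have h1 : ((1:ℂ) + t*Complex.I) ≠ 0 := by
    intro h
    have := congrArg Complex.re h
    simp at this
  have hsC : (s:ℂ) ≠ 0 := by exact_mod_cast hs0
  have hs' : ((s:ℝ):ℂ) = 1 + (t:ℂ)^2 := by exact_mod_cast congrArg Complex.ofReal hs
  rw [Complex.ofReal_div]
  field_simp
  linear_combination hs' + (t:ℂ)^2 * Complex.I_sq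

lemma chirp_div_helper' (t s : ℝ) (hs : s = 1 + t^2) (hs0 : s ≠ 0) :
    (π:ℂ)^2 / (((π/s : ℝ):ℂ)*(1 + t*Complex.I)) = (π:ℂ)*(1 - t*Complex.I) := by
  have hπ : (π:ℂ) ≠ 0 := by exact_mod_cast Real.pi_ne_zero
  have h1 : ((1:ℂ) + t*Complex.I) ≠ 0 := by
    intro h
    have := congrArg Complex.re h
    simp at this
  have hsC : (s:ℂ) ≠ 0 := by exact_mod_cast hs0
  have hs' : ((s:ℝ):ℂ) = 1 + (t:ℂ)^2 := by exact_mod_cast congrArg Complex.ofReal hs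
  rw [Complex.ofReal_div]
  field_simp
  linear_combination hs' + (t:ℂ)^2 * Complex.I_sq

set_option maxHeartbeats 1000000 in
/-- **Non-surjectivity of the extended Fourier transform** (case `k ≡ 0`, `a = 2`):
for `1 < p < 2` with conjugate exponent `q = p/(p-1)`, any continuous linear map
`T : Lᵖ(ℝ^N; ℂ) → L^q(ℝ^N; ℂ)` which agrees with the Fourier transform on
`L¹ ∩ Lᵖ` fails to be surjective.  (The `Fact` instances merely record that
`p, q ≥ 1`, which already follows from the hypotheses.) -/
theorem fourier_extension_not_surjective
    (N : ℕ) (hN : 1 ≤ N) (p q : ℝ) (hp1 : 1 < p) (hp2 : p < 2) (hq : q = p / (p - 1))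
    [Fact (1 ≤ ENNReal.ofReal p)] [Fact (1 ≤ ENNReal.ofReal q)]
    (T : Lp ℂ (ENNReal.ofReal p) (volume : Measure (EuclideanSpace ℝ (Fin N))) →L[ℂ]
         Lp ℂ (ENNReal.ofReal q) (volume : Measure (EuclideanSpace ℝ (Fin N))))
    (hT : ∀ (f : EuclideanSpace ℝ (Fin N) → ℂ) (hf1 : MemLp f 1 volume)
        (hfp : MemLp f (ENNReal.ofReal p) volume),
        ⇑(T (hfp.toLp f)) =ᵐ[volume] FourierTransform.fourier f) :
    ¬ Function.Surjective T := by
  intro hsurj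
  have hp0 : 0 < p := lt_trans one_pos hp1
  have hp1' : 0 < p - 1 := by linarith
  have hq0 : 0 < q := by rw [hq]; positivity
  have hq2 : 2 < q := by
    rw [hq, lt_div_iff₀ hp1']; nlinarith
  have hconj : 1/p + 1/q = 1 := by rw [hq]; field_simp; ring
  have hPQ : (1:ℝ≥0∞)/1 = 1/(ENNReal.ofReal p) + 1/(ENNReal.ofReal q) := by
    have h2 : 1/(ENNReal.ofReal p) + 1/(ENNReal.ofReal q) = ENNReal.ofReal (1/p + 1/q) := by
      rw [ENNReal.ofReal_add (by positivity) (by positivity), one_div, one_div,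
        ← ENNReal.ofReal_inv_of_pos hp0, ← ENNReal.ofReal_inv_of_pos hq0, one_div, one_div]
    rw [h2, hconj]
    simp
  obtain ⟨C, hC0, hCbd⟩ := T.exists_preimage_norm_le hsurj
  have hNpos : (0:ℝ) < N := by exact_mod_cast Nat.lt_of_lt_of_le Nat.zero_lt_one hN
  set a : ℝ := (N:ℝ)/(2*q) with ha_def
  have ha0 : 0 < a := by positivity
  have hea : a < (N:ℝ)/4 := by
    rw [ha_def, div_lt_div_iff₀ (by positivity) (by norm_num)]
    nlinarith
  set K : ℝ := (1/2:ℝ) ^ ((N:ℝ)/2) with hK_def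
  have hK0 : 0 < K := Real.rpow_pos_of_pos (by norm_num) _
  set Dq : ℝ := (π/(q*π)) ^ a with hDq_def
  have hDq0 : 0 ≤ Dq := Real.rpow_nonneg (by positivity) _
  -- choose the dilation parameter s
  have htends : Filter.Tendsto (fun s : ℝ => C * (s ^ (-(N:ℝ)/4) * (s/q) ^ a) * Dq)
      Filter.atTop (nhds 0) := by
    have h1 : Filter.Tendsto (fun s : ℝ => s ^ (a - (N:ℝ)/4)) Filter.atTop (nhds 0) := by
      have := tendsto_rpow_neg_atTop (y := (N:ℝ)/4 - a) (by linarith)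
      simpa [neg_sub] using this
    have h2 : Filter.Tendsto (fun s : ℝ => C * (s ^ (a - (N:ℝ)/4) * (q⁻¹) ^ a) * Dq)
        Filter.atTop (nhds 0) := by
      simpa using ((h1.mul_const ((q⁻¹) ^ a)).const_mul C).mul_const Dq
    apply h2.congr'
    filter_upwards [Filter.eventually_gt_atTop 0] with s hs
    have e1 : s ^ (a - (N:ℝ)/4) = s ^ a * s ^ (-(N:ℝ)/4) := by
      rw [← Real.rpow_add hs]; congr 1; ring
    have e2 : (s/q) ^ a = s ^ a * (q⁻¹) ^ a := by
      rw [div_eq_mul_inv, Real.mul_rpow hs.le (by positivity)]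
    rw [e1, e2]; ring
  obtain ⟨s, hslt, hs1⟩ :=
    ((htends.eventually (gt_mem_nhds hK0)).and (Filter.eventually_ge_atTop 1)).exists
  have hs0 : (0:ℝ) < s := lt_of_lt_of_le one_pos hs1
  set t : ℝ := Real.sqrt (s - 1) with ht_def
  have hts : s = 1 + t^2 := by rw [ht_def, Real.sq_sqrt (by linarith)]; ring
  have hπC : (π:ℂ) ≠ 0 := by exact_mod_cast Real.pi_ne_zero
  have h1p : ((1:ℂ) + t*Complex.I) ≠ 0 := by
    intro h; have := congrArg Complex.re h; simp at this
  -- the chirp h and its Fourier transform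
  set c : ℂ := (π:ℂ) * (1 + t*Complex.I) with hc_def
  have hcre : 0 < c.re := by
    rw [hc_def]; simp [Complex.mul_re]; exact Real.pi_pos
  set kh : ℂ := ((π/s : ℝ):ℂ) * (1 - t*Complex.I) with hkh_def
  have hkhre : kh.re = π/s := by
    rw [hkh_def]; simp [Complex.mul_re]
  have hkhre0 : 0 < kh.re := by rw [hkhre]; positivity
  have hπ2c : (π:ℂ)^2 / c = kh := chirp_div_helper t s hts hs0.ne'
  set h : EuclideanSpace ℝ (Fin N) → ℂ := fun x => Complex.exp (-c * (‖x‖:ℂ)^2) with hh_def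
  have hh1 : Integrable h volume := integrable_chirp c hcre
  set Ah : ℂ := ((π:ℂ)/c) ^ ((N:ℂ)/2) with hAh_def
  have hFh : 𝓕 h = fun w : EuclideanSpace ℝ (Fin N) =>
      Ah * Complex.exp (-kh * (‖w‖:ℂ)^2) := by
    funext w
    rw [hh_def, fourier_chirp c hcre w]
    congr 1
    rw [show -(π:ℂ)^2 * (‖w‖:ℂ)^2 / c = -((π:ℂ)^2/c) * (‖w‖:ℂ)^2 by ring, hπ2c]
  have hFhQ : MemLp (𝓕 h) (ENNReal.ofReal q) volume := by
    rw [hFh]; exact (memℒp_chirp kh hkhre0 hq0).const_mul Ah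
  -- the test function φ
  set c' : ℂ := ((π/s : ℝ):ℂ) * (1 + t*Complex.I) with hc'_def
  have hc're : c'.re = π/s := by rw [hc'_def]; simp [Complex.mul_re]
  have hc're0 : 0 < c'.re := by rw [hc're]; positivity
  have hc'0 : c' ≠ 0 := by
    rw [hc'_def]
    exact mul_ne_zero (Complex.ofReal_ne_zero.mpr (by positivity)) h1p
  have hπ2c' : (π:ℂ)^2 / c' = (π:ℂ) * (1 - t*Complex.I) := chirp_div_helper' t s hts hs0.ne'
  set A : ℂ := ((π:ℂ)/c') ^ ((N:ℂ)/2) with hA_def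
  have hA0 : A ≠ 0 := by
    rw [hA_def, Complex.cpow_def_of_ne_zero (div_ne_zero hπC hc'0)]
    exact Complex.exp_ne_zero _
  set φ : EuclideanSpace ℝ (Fin N) → ℂ := fun x => A⁻¹ * Complex.exp (-c' * (‖x‖:ℂ)^2)
    with hφ_def
  have hφP : MemLp φ (ENNReal.ofReal p) volume := (memℒp_chirp c' hc're0 hp0).const_mul A⁻¹
  have hφ1 : Integrable φ volume := (integrable_chirp c' hc're0).const_mul A⁻¹
  have hFφ : 𝓕 φ = fun w : EuclideanSpace ℝ (Fin N) =>
      Complex.exp (-((π:ℂ)*(1 - t*Complex.I)) * (‖w‖:ℂ)^2) := by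
    funext w
    rw [hφ_def]
    rw [fourier_const_mul A⁻¹ (fun x : EuclideanSpace ℝ (Fin N) =>
      Complex.exp (-c' * (‖x‖:ℂ)^2)) w]
    rw [fourier_chirp c' hc're0 w, ← hA_def, ← mul_assoc, inv_mul_cancel₀ hA0, one_mul]
    congr 1
    rw [show -(π:ℂ)^2 * (‖w‖:ℂ)^2 / c' = -((π:ℂ)^2/c') * (‖w‖:ℂ)^2 by ring, hπ2c']
  have hπmre : ((π:ℂ) * (1 - t*Complex.I)).re = π := by simp [Complex.mul_re]
  have hFφQ : MemLp (𝓕 φ) (ENNReal.ofReal q) volume := by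
    rw [hFφ]
    exact memℒp_chirp _ (by rw [hπmre]; exact Real.pi_pos) hq0
  -- preimage from surjectivity
  set y := hFhQ.toLp (𝓕 h) with hy_def
  obtain ⟨u0, hTu0, hu0norm⟩ := hCbd y
  -- value of the pairing
  have hval : ∫ x, h x * 𝓕 φ x = ((1/2 : ℂ)) ^ ((N:ℂ)/2) := by
    rw [hFφ]
    have hpt : ∀ x : EuclideanSpace ℝ (Fin N),
        h x * Complex.exp (-((π:ℂ)*(1 - t*Complex.I)) * (‖x‖:ℂ)^2)
        = Complex.exp (-(((2*π : ℝ)):ℂ) * (‖x‖:ℂ)^2) := by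
      intro x
      rw [hh_def, ← Complex.exp_add]
      congr 1
      rw [hc_def]
      push_cast
      ring
    simp only [hpt]
    rw [show -(((2*π : ℝ)):ℂ) = -((2*π : ℝ):ℂ) by norm_num]
    have := GaussianFourier.integral_cexp_neg_mul_sq_norm
      (V := EuclideanSpace ℝ (Fin N)) (b := ((2*π : ℝ):ℂ)) (by simp [Real.pi_pos])
    rw [this, finrank_euclideanSpace_fin]
    congr 1
    push_cast
    rw [div_eq_div_iff (by exact_mod_cast (by positivity : (2:ℝ)*π ≠ 0) : ((2:ℂ)*π) ≠ 0) two_ne_zero]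
    ring
  have hKnorm : ‖((1/2 : ℂ)) ^ ((N:ℂ)/2)‖ = K := by
    rw [show ((N:ℂ)/2) = (((N:ℝ)/2 : ℝ):ℂ) by push_cast; ring,
      show ((1/2 : ℂ)) = (((1/2:ℝ)):ℂ) by norm_num,
      Complex.norm_cpow_eq_rpow_re_of_pos (by norm_num : (0:ℝ) < 1/2)]
    rw [hK_def]
    norm_num
  -- the extension identity
  have hid : ∫ x, (T u0 : EuclideanSpace ℝ (Fin N) → ℂ) x * φ x
      = ∫ x, (u0 : EuclideanSpace ℝ (Fin N) → ℂ) x * 𝓕 φ x :=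
    key_identity hPQ (by simp) T hT hφP hφ1 hFφQ u0
  have hleft : ∫ x, (T u0 : EuclideanSpace ℝ (Fin N) → ℂ) x * φ x
      = ∫ x, 𝓕 h x * φ x := by
    rw [hTu0]
    apply integral_congr_ae
    filter_upwards [hFhQ.coeFn_toLp] with x hx
    rw [hy_def, hx]
  have hmf : ∫ x, 𝓕 h x * φ x = ∫ x, h x * 𝓕 φ x :=
    mult_formula hh1 hφ1
  -- norm computations
  have habs : ‖((1:ℂ) + t*Complex.I)‖ = Real.sqrt s := by
    rw [show ((1:ℂ) + t*Complex.I) = (((1:ℝ)):ℂ) + (t:ℝ)*Complex.I by norm_num,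
      Complex.norm_def, Complex.normSq_add_mul_I]
    rw [show (1:ℝ)^2 + t^2 = s by rw [hts]; ring]
  have habsc : ‖((π:ℂ)/c)‖ = (Real.sqrt s)⁻¹ := by
    rw [norm_div, hc_def, norm_mul, habs, Complex.norm_real, Real.norm_eq_abs, abs_of_pos Real.pi_pos,
      div_mul_eq_div_div, div_self (ne_of_gt Real.pi_pos), one_div]
  have hAhnorm : ‖Ah‖ = s ^ (-(N:ℝ)/4) := by
    rw [hAh_def, show ((N:ℂ)/2) = (((N:ℝ)/2 : ℝ):ℂ) by push_cast; ring,
      norm_cpow_real, habsc, Real.sqrt_eq_rpow,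
      ← Real.rpow_neg hs0.le, ← Real.rpow_mul hs0.le]
    congr 1
    ring
  have hynorm : ‖y‖ = s ^ (-(N:ℝ)/4) * (π/(q*(π/s))) ^ a := by
    rw [hy_def, Lp.norm_toLp, hFh]
    rw [show (fun w : EuclideanSpace ℝ (Fin N) => Ah * Complex.exp (-kh * (‖w‖:ℂ)^2))
        = Ah • (fun w : EuclideanSpace ℝ (Fin N) => Complex.exp (-kh * (‖w‖:ℂ)^2)) from by
      funext w; simp [smul_eq_mul]]
    rw [eLpNorm_const_smul, eLpNorm_chirp kh hkhre0 hq0, hkhre]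
    rw [ENNReal.toReal_mul, ENNReal.toReal_ofReal (by positivity), ha_def]
    simp [hAhnorm]
  have hsq : π/(q*(π/s)) = s/q := by
    field_simp
  have hDqval : (eLpNorm (𝓕 φ) (ENNReal.ofReal q) volume).toReal = Dq := by
    rw [hFφ, eLpNorm_chirp _ (by rw [hπmre]; exact Real.pi_pos) hq0, hπmre,
      ENNReal.toReal_ofReal (by positivity), hDq_def, ha_def]
  -- the final chain
  have hchain : K ≤ C * (s ^ (-(N:ℝ)/4) * (s/q) ^ a) * Dq := by
    have pr := pairing hPQ (Lp.memLp u0) hFφQ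
    calc K = ‖∫ x, h x * 𝓕 φ x‖ := by rw [hval, hKnorm]
      _ = ‖∫ x, (u0 : EuclideanSpace ℝ (Fin N) → ℂ) x * 𝓕 φ x‖ := by
          rw [← hid, hleft, hmf]
      _ ≤ (eLpNorm (⇑u0) (ENNReal.ofReal p) volume).toReal
            * (eLpNorm (𝓕 φ) (ENNReal.ofReal q) volume).toReal := pr.2
      _ = ‖u0‖ * Dq := by rw [hDqval, ← Lp.norm_def]
      _ ≤ (C * ‖y‖) * Dq := mul_le_mul_of_nonneg_right hu0norm hDq0
      _ = C * (s ^ (-(N:ℝ)/4) * (s/q) ^ a) * Dq := by rw [hynorm, hsq]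
  linarith
end

section
/- Clarkson-type inequality for the weighted measure μ_{k,a} (the paper's Lemma; it involves no Fourier transform): let s > 0. There exists a finite constant D = D(N, k, a, s), independent of f, such that for every f ∈ L¹(ℝ^N, μ_{k,a}) ∩ L²(ℝ^N, μ_{k,a}), ‖f‖_{L¹(μ_{k,a})} ≤ D · ‖f‖_{L²(μ_{k,a})}^{4s/(d+4s)} · (∫_{ℝ^N} ‖x‖^{2s} |f(x)| dμ_{k,a}(x))^{d/(d+4s)}, with the convention that the right-hand side is +∞ (and the inequality trivially true) if the weighted integral is infinite. -/
open MeasureTheory ENNReal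
open scoped RealInnerProductSpace

/-- The weight `θ_{k,a}(x) = ‖x‖^{a-2} ∏_{α ∈ R⁺} |⟨α,x⟩|^{2 k_α}`. -/
noncomputable def thetaWeight {N : ℕ} (R : Finset (EuclideanSpace ℝ (Fin N)))
    (k : EuclideanSpace ℝ (Fin N) → ℝ) (a : ℝ) (x : EuclideanSpace ℝ (Fin N)) : ℝ :=
  ‖x‖ ^ (a - 2) * ∏ α ∈ R, |⟪α, x⟫| ^ (2 * k α)

/-- The measure `μ_{k,a}` on `ℝ^N` with density `θ_{k,a}` with respect to Lebesgue measure. -/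
noncomputable def mukaMeasure {N : ℕ} (R : Finset (EuclideanSpace ℝ (Fin N)))
    (k : EuclideanSpace ℝ (Fin N) → ℝ) (a : ℝ) : Measure (EuclideanSpace ℝ (Fin N)) :=
  volume.withDensity fun x => ENNReal.ofReal (thetaWeight R k a x)

lemma theta_le {N : ℕ} (R : Finset (EuclideanSpace ℝ (Fin N)))
    (k : EuclideanSpace ℝ (Fin N) → ℝ) (hk : ∀ α ∈ R, 0 ≤ k α) (a : ℝ)
    (x : EuclideanSpace ℝ (Fin N)) (hx : x ≠ 0) :
    thetaWeight R k a x ≤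
      (∏ α ∈ R, ‖α‖ ^ (2 * k α)) * ‖x‖ ^ (a - 2 + 2 * ∑ α ∈ R, k α) := by
  have hxpos : (0:ℝ) < ‖x‖ := norm_pos_iff.2 hx
  have h1 : ∏ α ∈ R, |⟪α, x⟫| ^ (2 * k α) ≤
      (∏ α ∈ R, ‖α‖ ^ (2 * k α)) * ‖x‖ ^ (2 * ∑ α ∈ R, k α) := by
    have : ∏ α ∈ R, |⟪α, x⟫| ^ (2 * k α) ≤ ∏ α ∈ R, (‖α‖ * ‖x‖) ^ (2 * k α) := by
      refine Finset.prod_le_prod (fun α hα => ?_) (fun α hα => ?_)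
      · positivity
      · exact Real.rpow_le_rpow (abs_nonneg _) (abs_real_inner_le_norm α x)
          (by have := hk α hα; linarith)
    refine this.trans ?_
    rw [Finset.mul_sum]
    simp_rw [Real.rpow_sum_of_pos hxpos, ← Finset.prod_mul_distrib]
    refine le_of_eq (Finset.prod_congr rfl fun α hα => ?_)
    rw [Real.mul_rpow (norm_nonneg _) (norm_nonneg _)]
  calc thetaWeight R k a x ≤ ‖x‖ ^ (a-2) *
      ((∏ α ∈ R, ‖α‖ ^ (2 * k α)) * ‖x‖ ^ (2 * ∑ α ∈ R, k α)) := by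
        unfold thetaWeight
        exact mul_le_mul_of_nonneg_left h1 (by positivity)
    _ = (∏ α ∈ R, ‖α‖ ^ (2 * k α)) * ‖x‖ ^ (a - 2 + 2 * ∑ α ∈ R, k α) := by
        rw [Real.rpow_add hxpos]; ring

lemma muka_singleton_zero {N : ℕ} (hN : 1 ≤ N) (R : Finset (EuclideanSpace ℝ (Fin N)))
    (k : EuclideanSpace ℝ (Fin N) → ℝ) (a : ℝ) :
    mukaMeasure R k a {0} = 0 := by
  have hvol : (volume : Measure (EuclideanSpace ℝ (Fin N))) {0} = 0 := by
    have h0 : ({0} : Set (EuclideanSpace ℝ (Fin N))) ⊆ Metric.closedBall 0 0 := by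
      simp
    refine le_antisymm (le_trans (measure_mono h0) ?_) zero_le
    rw [Measure.addHaar_closedBall _ _ le_rfl]
    simp [zero_pow (by omega : N ≠ 0), finrank_euclideanSpace_fin]
  exact withDensity_absolutelyContinuous volume _ hvol

lemma muka_closedBall_le {N : ℕ} (hN : 1 ≤ N) (R : Finset (EuclideanSpace ℝ (Fin N)))
    (k : EuclideanSpace ℝ (Fin N) → ℝ) (hk : ∀ α ∈ R, 0 ≤ k α) (a : ℝ)
    (hd : 0 < 2 * (∑ α ∈ R, k α) + N + a - 2) :
    ∃ C : ℝ≥0∞, C ≠ ∞ ∧ ∀ r : ℝ, 0 < r →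
      mukaMeasure R k a (Metric.closedBall 0 r)
        ≤ C * ENNReal.ofReal r ^ (2 * (∑ α ∈ R, k α) + N + a - 2) := by
  set d : ℝ := 2 * (∑ α ∈ R, k α) + N + a - 2 with hd_def
  set p : ℝ := a - 2 + 2 * ∑ α ∈ R, k α with hp_def
  have hpN : p + N = d := by rw [hp_def, hd_def]; ring
  set c : ℝ := ∏ α ∈ R, ‖α‖ ^ (2 * k α) with hc_def
  have hc0 : 0 ≤ c := Finset.prod_nonneg fun α _ => Real.rpow_nonneg (norm_nonneg _) _
  set m : ℝ := max 1 ((2:ℝ) ^ (-p)) with hm_def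
  have hm1 : (1:ℝ) ≤ m := le_max_left _ _
  set V : ℝ≥0∞ := volume (Metric.ball (0 : EuclideanSpace ℝ (Fin N)) 1) with hV_def
  have hVfin : V ≠ ∞ := measure_ball_lt_top.ne
  set t : ℝ := (2⁻¹ : ℝ) ^ d with ht_def
  have ht0 : 0 ≤ t := Real.rpow_nonneg (by norm_num) _
  have ht1 : t < 1 := Real.rpow_lt_one (by norm_num) (by norm_num) hd
  have htlt : ENNReal.ofReal t < 1 := by
    rw [← ENNReal.ofReal_one]; exact ENNReal.ofReal_lt_ofReal_iff_of_nonneg ht0 |>.2 ht1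
  refine ⟨ENNReal.ofReal (c * m) * V * (1 - ENNReal.ofReal t)⁻¹, ?_, ?_⟩
  · refine ENNReal.mul_ne_top (ENNReal.mul_ne_top ENNReal.ofReal_ne_top hVfin) ?_
    rw [ENNReal.inv_ne_top]
    exact fun h => absurd (tsub_eq_zero_iff_le.1 h) (not_le.2 htlt)
  intro r hr
  -- the dyadic annuli
  set T : ℕ → Set (EuclideanSpace ℝ (Fin N)) := fun j =>
    Metric.closedBall 0 (r * (2⁻¹:ℝ) ^ j) \ Metric.closedBall 0 (r * (2⁻¹:ℝ) ^ (j+1)) with hT_def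
  have hρpos : ∀ j : ℕ, (0:ℝ) < r * (2⁻¹:ℝ) ^ j := fun j => by positivity
  -- covering
  have hcover : Metric.closedBall (0 : EuclideanSpace ℝ (Fin N)) r \ {0} ⊆ ⋃ j, T j := by
    intro x hx
    have hx0 : x ≠ 0 := hx.2
    have hxpos : (0:ℝ) < ‖x‖ := norm_pos_iff.2 hx0
    have hxr : ‖x‖ ≤ r := by simpa using hx.1
    have hex : ∃ n : ℕ, r * (2⁻¹:ℝ) ^ n < ‖x‖ := by
      obtain ⟨n, hn⟩ := exists_pow_lt_of_lt_one (div_pos hxpos hr) (by norm_num : (2⁻¹:ℝ) < 1)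
      exact ⟨n, by rwa [mul_comm, ← lt_div_iff₀ hr]⟩
    classical
    let n₀ := Nat.find hex
    have hn₀ : r * (2⁻¹:ℝ) ^ n₀ < ‖x‖ := Nat.find_spec hex
    have hn₀ne : n₀ ≠ 0 := by
      intro h
      have := hn₀; rw [h] at this; simp at this; linarith
    obtain ⟨j, hj⟩ : ∃ j, n₀ = j + 1 := ⟨n₀ - 1, (Nat.succ_pred_eq_of_pos (Nat.pos_of_ne_zero hn₀ne)).symm⟩
    have hnot : ¬ (r * (2⁻¹:ℝ) ^ j < ‖x‖) := Nat.find_min hex (by omega)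
    refine Set.mem_iUnion.2 ⟨j, ?_, ?_⟩
    · simpa [Metric.mem_closedBall] using not_lt.1 hnot
    · simp only [Metric.mem_closedBall, not_le]
      rw [← hj]
      simpa using hn₀
  -- bound on each annulus
  have hTj : ∀ j : ℕ, mukaMeasure R k a (T j) ≤
      ENNReal.ofReal (c * m) * V * ENNReal.ofReal ((r * (2⁻¹:ℝ) ^ j) ^ d) := by
    intro j
    set ρ : ℝ := r * (2⁻¹:ℝ) ^ j with hρ_def
    have hρ0 : 0 < ρ := hρpos j
    have hmeas : MeasurableSet (T j) :=
      measurableSet_closedBall.diff measurableSet_closedBall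
    have hbound : ∀ x ∈ T j, ENNReal.ofReal (thetaWeight R k a x)
        ≤ ENNReal.ofReal (c * (m * ρ ^ p)) := by
      intro x hxT
      have hx1 : ‖x‖ ≤ ρ := by
        have := hxT.1; rwa [Metric.mem_closedBall, dist_zero_right] at this
      have hx2 : r * (2⁻¹:ℝ) ^ (j+1) < ‖x‖ := by
        have := hxT.2; simp only [Metric.mem_closedBall, dist_zero_right, not_le] at this
        exact this
      have hx2' : (0:ℝ) < ‖x‖ := lt_trans (hρpos (j+1)) hx2
      have hx0 : x ≠ 0 := norm_pos_iff.1 hx2'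
      refine ENNReal.ofReal_le_ofReal ?_
      refine (theta_le R k hk a x hx0).trans ?_
      rw [← hp_def, ← hc_def]
      refine mul_le_mul_of_nonneg_left ?_ hc0
      -- ‖x‖ ^ p ≤ m * ρ ^ p
      rcases le_or_gt 0 p with hp0 | hp0
      · calc ‖x‖ ^ p ≤ ρ ^ p := Real.rpow_le_rpow (norm_nonneg _) hx1 hp0
          _ ≤ m * ρ ^ p := le_mul_of_one_le_left (Real.rpow_nonneg hρ0.le _) hm1
      · have h1 : ‖x‖ ^ p ≤ (r * (2⁻¹:ℝ) ^ (j+1)) ^ p :=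
          Real.rpow_le_rpow_of_nonpos (hρpos (j+1)) hx2.le hp0.le
        have h2 : (r * (2⁻¹:ℝ) ^ (j+1)) ^ p = (2:ℝ) ^ (-p) * ρ ^ p := by
          have : r * (2⁻¹:ℝ) ^ (j+1) = ρ * 2⁻¹ := by rw [hρ_def]; ring
          rw [this, Real.mul_rpow hρ0.le (by norm_num), Real.inv_rpow (by norm_num),
            ← Real.rpow_neg (by norm_num)]
          ring
        refine h1.trans ?_
        rw [h2]
        exact mul_le_mul_of_nonneg_right (le_max_right _ _) (Real.rpow_nonneg hρ0.le _)
    calc mukaMeasure R k a (T j)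
        = ∫⁻ x in T j, ENNReal.ofReal (thetaWeight R k a x) ∂volume := by
          rw [mukaMeasure, withDensity_apply _ hmeas]
      _ ≤ ∫⁻ _ in T j, ENNReal.ofReal (c * (m * ρ ^ p)) ∂volume :=
          setLIntegral_mono' hmeas hbound
      _ = ENNReal.ofReal (c * (m * ρ ^ p)) * volume (T j) := setLIntegral_const _ _
      _ ≤ ENNReal.ofReal (c * (m * ρ ^ p)) * volume (Metric.closedBall (0:EuclideanSpace ℝ (Fin N)) ρ) := by
          gcongr
          exact Set.diff_subset
      _ = ENNReal.ofReal (c * m) * V * ENNReal.ofReal (ρ ^ d) := by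
          rw [Measure.addHaar_closedBall _ _ hρ0.le, finrank_euclideanSpace_fin, ← hV_def]
          have key : ENNReal.ofReal (c * (m * ρ ^ p)) * ENNReal.ofReal ((ρ:ℝ) ^ (N:ℕ))
              = ENNReal.ofReal (c * m) * ENNReal.ofReal (ρ ^ d) := by
            rw [← ENNReal.ofReal_mul (by positivity), ← ENNReal.ofReal_mul (by positivity)]
            congr 1
            have hNn : (ρ:ℝ) ^ (N:ℕ) = ρ ^ (N:ℝ) := (Real.rpow_natCast ρ N).symm
            rw [hNn]
            calc c * (m * ρ ^ p) * ρ ^ (N:ℝ) = c * m * (ρ ^ p * ρ ^ (N:ℝ)) := by ring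
              _ = c * m * ρ ^ d := by rw [← Real.rpow_add hρ0, hpN]
          calc ENNReal.ofReal (c * (m * ρ ^ p)) * (ENNReal.ofReal (ρ ^ N) * V)
              = ENNReal.ofReal (c * (m * ρ ^ p)) * ENNReal.ofReal ((ρ:ℝ) ^ (N:ℕ)) * V := by ring
            _ = ENNReal.ofReal (c * m) * ENNReal.ofReal (ρ ^ d) * V := by rw [key]
            _ = ENNReal.ofReal (c * m) * V * ENNReal.ofReal (ρ ^ d) := by ring
  -- sum up
  have hgeom : ∀ j : ℕ, (r * (2⁻¹:ℝ) ^ j) ^ d = r ^ d * t ^ j := by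
    intro j
    rw [Real.mul_rpow hr.le (by positivity), ht_def, ← Real.rpow_natCast ((2⁻¹:ℝ)) j,
      ← Real.rpow_natCast ((2⁻¹:ℝ) ^ d) j, ← Real.rpow_mul (by norm_num),
      ← Real.rpow_mul (by norm_num), mul_comm (j:ℝ) d]
  calc mukaMeasure R k a (Metric.closedBall 0 r)
      = mukaMeasure R k a (Metric.closedBall 0 r \ {0}) :=
        (measure_diff_null (muka_singleton_zero hN R k a)).symm
    _ ≤ mukaMeasure R k a (⋃ j, T j) := measure_mono hcover
    _ ≤ ∑' j, mukaMeasure R k a (T j) := measure_iUnion_le _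
    _ ≤ ∑' j, ENNReal.ofReal (c * m) * V * ENNReal.ofReal ((r * (2⁻¹:ℝ) ^ j) ^ d) :=
        ENNReal.tsum_le_tsum hTj
    _ = ENNReal.ofReal (c * m) * V * ∑' j, ENNReal.ofReal ((r * (2⁻¹:ℝ) ^ j) ^ d) :=
        ENNReal.tsum_mul_left
    _ = ENNReal.ofReal (c * m) * V * (ENNReal.ofReal (r ^ d) * (1 - ENNReal.ofReal t)⁻¹) := by
        congr 1
        simp_rw [hgeom]
        rw [← ENNReal.tsum_geometric (ENNReal.ofReal t)]
        rw [← ENNReal.tsum_mul_left]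
        congr 1
        funext j
        rw [ENNReal.ofReal_mul (by positivity), ENNReal.ofReal_pow ht0]
    _ = ENNReal.ofReal (c * m) * V * (1 - ENNReal.ofReal t)⁻¹ * ENNReal.ofReal r ^ d := by
        rw [ENNReal.ofReal_rpow_of_pos hr]
        ring

lemma opt_lemma {L A B C' : ℝ≥0∞} {d s : ℝ} (hd : 0 < d) (hs : 0 < s)
    (hA0 : A ≠ 0) (hA : A ≠ ∞) (hB0 : B ≠ 0)
    (H : ∀ ρ : ℝ≥0∞, ρ ≠ 0 → ρ ≠ ∞ → L ≤ C' * ρ ^ (d/2) * A + ρ ^ (-(2*s)) * B) :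
    L ≤ (C' + 1) * A ^ (4*s/(d+4*s)) * B ^ (d/(d+4*s)) := by
  have he : (0:ℝ) < d + 4*s := by linarith
  have hq : (0:ℝ) < d/(d+4*s) := by positivity
  have hp : (0:ℝ) < 4*s/(d+4*s) := by positivity
  rcases eq_or_ne B ∞ with hB | hB
  · -- RHS is ∞
    rw [hB, ENNReal.top_rpow_of_pos hq]
    rw [ENNReal.mul_top]
    · exact le_top
    · intro h
      rcases mul_eq_zero.1 h with h1 | h1
      · exact (by simp : (C' + 1 : ℝ≥0∞) ≠ 0) h1
      · exact (ENNReal.rpow_eq_zero_iff.1 h1).elim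
          (fun h2 => hA0 h2.1) (fun h2 => hA h2.1)
  · set ρ : ℝ≥0∞ := (B * A⁻¹) ^ (2/(d+4*s)) with hρ_def
    have hBA0 : B * A⁻¹ ≠ 0 := by
      simp [hB0, hA]
    have hBAt : B * A⁻¹ ≠ ∞ := by
      exact ENNReal.mul_ne_top hB (by simp [hA0])
    have hρ0 : ρ ≠ 0 := by
      simp only [hρ_def, ne_eq, ENNReal.rpow_eq_zero_iff, not_or]
      constructor
      · rintro ⟨h1, -⟩; exact hBA0 h1
      · rintro ⟨h1, -⟩; exact hBAt h1
    have hρt : ρ ≠ ∞ := by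
      simp only [hρ_def, ne_eq, ENNReal.rpow_eq_top_iff, not_or]
      constructor
      · rintro ⟨h1, -⟩; exact hBA0 h1
      · rintro ⟨h1, -⟩; exact hBAt h1
    refine (H ρ hρ0 hρt).trans (le_of_eq ?_)
    have hmul : ∀ c : ℝ, (B * A⁻¹) ^ c = B ^ c * A ^ (-c) := by
      intro c
      rw [ENNReal.mul_rpow_of_ne_top hB (by simp [hA0]), ENNReal.inv_rpow,
        ← ENNReal.rpow_neg]
    have e1 : (2/(d+4*s)) * (d/2) = d/(d+4*s) := by ring
    have e2 : (2/(d+4*s)) * (-(2*s)) = -(4*s/(d+4*s)) := by ring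
    have h1 : ρ ^ (d/2) = B ^ (d/(d+4*s)) * A ^ (-(d/(d+4*s))) := by
      rw [hρ_def, ← ENNReal.rpow_mul, e1, hmul]
    have h2 : ρ ^ (-(2*s)) = B ^ (-(4*s/(d+4*s))) * A ^ (4*s/(d+4*s)) := by
      rw [hρ_def, ← ENNReal.rpow_mul, e2, hmul, neg_neg]
    have hA' : A ^ (-(d/(d+4*s))) * A = A ^ (4*s/(d+4*s)) := by
      nth_rewrite 2 [← ENNReal.rpow_one A]
      rw [← ENNReal.rpow_add _ _ hA0 hA]
      congr 1; field_simp; ring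
    have hB' : B ^ (-(4*s/(d+4*s))) * B = B ^ (d/(d+4*s)) := by
      nth_rewrite 2 [← ENNReal.rpow_one B]
      rw [← ENNReal.rpow_add _ _ hB0 hB]
      congr 1; field_simp; ring
    calc C' * ρ ^ (d/2) * A + ρ ^ (-(2*s)) * B
        = C' * (B ^ (d/(d+4*s)) * (A ^ (-(d/(d+4*s))) * A))
          + A ^ (4*s/(d+4*s)) * (B ^ (-(4*s/(d+4*s))) * B) := by
          rw [h1, h2]; ring
      _ = (C' + 1) * A ^ (4*s/(d+4*s)) * B ^ (d/(d+4*s)) := by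
          rw [hA', hB']; ring

/-- **Clarkson-type inequality for the weighted measure `μ_{k,a}`**: with
`d = 2⟨k⟩ + N + a - 2 > 0` and `s > 0`, there is a finite constant `D = D(N,k,a,s)` such
that for every `f ∈ L¹(μ_{k,a}) ∩ L²(μ_{k,a})`,
`‖f‖_{L¹(μ)} ≤ D ‖f‖_{L²(μ)}^{4s/(d+4s)} (∫ ‖x‖^{2s} |f(x)| dμ)^{d/(d+4s)}`
(in `ℝ≥0∞`, so the right-hand side is `∞` if the weighted integral is infinite). -/
theorem clarkson_type_inequality
    (N : ℕ) (hN : 1 ≤ N)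
    (R : Finset (EuclideanSpace ℝ (Fin N))) (hR : ∀ α ∈ R, α ≠ 0)
    (k : EuclideanSpace ℝ (Fin N) → ℝ) (hk : ∀ α ∈ R, 0 ≤ k α)
    (a : ℝ) (ha : 0 < a) (hd : 2 < a + 2 * (∑ α ∈ R, k α) + N)
    (s : ℝ) (hs : 0 < s) :
    ∃ D : ℝ≥0∞, D < ∞ ∧ ∀ f : EuclideanSpace ℝ (Fin N) → ℂ,
      MemLp f 1 (mukaMeasure R k a) → MemLp f 2 (mukaMeasure R k a) →
      eLpNorm f 1 (mukaMeasure R k a)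
        ≤ D * eLpNorm f 2 (mukaMeasure R k a)
              ^ (4 * s / ((2 * (∑ α ∈ R, k α) + N + a - 2) + 4 * s)) *
            (∫⁻ x, (‖x‖₊ : ℝ≥0∞) ^ (2 * s) * (‖f x‖₊ : ℝ≥0∞) ∂(mukaMeasure R k a))
              ^ ((2 * (∑ α ∈ R, k α) + N + a - 2) / ((2 * (∑ α ∈ R, k α) + N + a - 2) + 4 * s)) := by
  set μ := mukaMeasure R k a with hμ_def
  set d : ℝ := 2 * (∑ α ∈ R, k α) + N + a - 2 with hd_def
  have hd0 : 0 < d := by rw [hd_def]; push_cast; linarith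
  obtain ⟨C, hCfin, hC⟩ := muka_closedBall_le hN R k hk a hd0
  set C'' : ℝ≥0∞ := C ^ (1/2 : ℝ) with hC''_def
  have hC''fin : C'' ≠ ∞ := ENNReal.rpow_ne_top_of_nonneg (by norm_num) hCfin
  refine ⟨C'' + 1, by simp [lt_top_iff_ne_top, hC''fin], ?_⟩
  intro f hf1 hf2
  set A : ℝ≥0∞ := eLpNorm f 2 μ with hA_def
  set B : ℝ≥0∞ := ∫⁻ x, (‖x‖₊ : ℝ≥0∞) ^ (2 * s) * (‖f x‖₊ : ℝ≥0∞) ∂μ with hB_def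
  have hAfin : A ≠ ∞ := hf2.eLpNorm_ne_top
  -- a.e. nonzero
  have hae0 : ∀ᵐ x ∂μ, x ≠ (0 : EuclideanSpace ℝ (Fin N)) := by
    rw [ae_iff]
    have : {x : EuclideanSpace ℝ (Fin N) | ¬ x ≠ 0} = {0} := by ext y; simp
    rw [this]
    exact muka_singleton_zero hN R k a
  rcases eq_or_ne A 0 with hA0 | hA0
  · have hf0 : f =ᵐ[μ] 0 := (eLpNorm_eq_zero_iff hf2.1 (by norm_num)).1 hA0
    have : eLpNorm f 1 μ = 0 := (eLpNorm_eq_zero_iff hf1.1 one_ne_zero).2 hf0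
    rw [this]
    exact zero_le
  rcases eq_or_ne B 0 with hB0 | hB0
  · -- B = 0 forces f = 0 a.e.
    have hmeasg : AEMeasurable
        (fun x => (‖x‖₊ : ℝ≥0∞) ^ (2 * s) * (‖f x‖₊ : ℝ≥0∞)) μ := by
      exact ((measurable_nnnorm.coe_nnreal_ennreal.pow_const (2*s)).aemeasurable.mul
        hf1.1.enorm)
    have hg0 : (fun x => (‖x‖₊ : ℝ≥0∞) ^ (2 * s) * (‖f x‖₊ : ℝ≥0∞)) =ᵐ[μ] 0 :=
      (lintegral_eq_zero_iff' hmeasg).1 hB0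
    have hf0 : f =ᵐ[μ] 0 := by
      filter_upwards [hg0, hae0] with x hx hx0
      simp only [Pi.zero_apply] at hx ⊢
      rcases mul_eq_zero.1 hx with h | h
      · exfalso
        rcases ENNReal.rpow_eq_zero_iff.1 h with ⟨h1, -⟩ | ⟨h1, -⟩
        · exact hx0 (by simpa using h1)
        · exact (ENNReal.coe_ne_top) h1
      · simpa using h
    have : eLpNorm f 1 μ = 0 := (eLpNorm_eq_zero_iff hf1.1 one_ne_zero).2 hf0
    rw [this]
    exact zero_le
  -- main case: apply the optimization lemma
  refine opt_lemma hd0 hs hA0 hAfin hB0 ?_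
  intro ρ hρ0 hρt
  set r : ℝ := ρ.toReal with hr_def
  have hr : 0 < r := ENNReal.toReal_pos hρ0 hρt
  have hofr : ENNReal.ofReal r = ρ := ENNReal.ofReal_toReal hρt
  set S : Set (EuclideanSpace ℝ (Fin N)) := Metric.closedBall 0 r with hS_def
  have hSmeas : MeasurableSet S := measurableSet_closedBall
  have hsplit : eLpNorm f 1 μ
      = (∫⁻ x in S, (‖f x‖₊ : ℝ≥0∞) ∂μ) + ∫⁻ x in Sᶜ, (‖f x‖₊ : ℝ≥0∞) ∂μ := by
    rw [eLpNorm_one_eq_lintegral_enorm]; exact (lintegral_add_compl (fun x => (‖f x‖₊ : ℝ≥0∞)) hSmeas).symm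
  have t1 : (∫⁻ x in S, (‖f x‖₊ : ℝ≥0∞) ∂μ) ≤ C'' * ρ ^ (d/2) * A := by
    have h1 : (∫⁻ x in S, (‖f x‖₊ : ℝ≥0∞) ∂μ) = eLpNorm f 1 (μ.restrict S) :=
      (eLpNorm_one_eq_lintegral_enorm (f := f) (μ := μ.restrict S)).symm
    have h2 : eLpNorm f 1 (μ.restrict S) ≤ eLpNorm f 2 (μ.restrict S)
        * ((μ.restrict S) Set.univ) ^ (1/(1:ℝ≥0∞).toReal - 1/(2:ℝ≥0∞).toReal) :=
      eLpNorm_le_eLpNorm_mul_rpow_measure_univ (by norm_num) (hf1.1.restrict)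
    have hexp : 1/(1:ℝ≥0∞).toReal - 1/(2:ℝ≥0∞).toReal = (1/2 : ℝ) := by
      simp [ENNReal.toReal_one]
      norm_num
    have h3 : eLpNorm f 2 (μ.restrict S) ≤ A :=
      eLpNorm_mono_measure f Measure.restrict_le_self
    have h4 : ((μ.restrict S) Set.univ) ^ (1/2 : ℝ) ≤ (C * ρ ^ d) ^ (1/2 : ℝ) := by
      refine ENNReal.rpow_le_rpow ?_ (by norm_num)
      rw [Measure.restrict_apply_univ]
      have := hC r hr
      rwa [hofr] at this
    have h5 : (C * ρ ^ d) ^ (1/2 : ℝ) = C'' * ρ ^ (d/2) := by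
      rw [ENNReal.mul_rpow_of_nonneg _ _ (by norm_num), hC''_def, ← ENNReal.rpow_mul]
      congr 1
      ring
    calc (∫⁻ x in S, (‖f x‖₊ : ℝ≥0∞) ∂μ)
        ≤ eLpNorm f 2 (μ.restrict S) * ((μ.restrict S) Set.univ) ^ (1/2 : ℝ) := by
          rw [h1]; rw [hexp] at h2; exact h2
      _ ≤ A * (C'' * ρ ^ (d/2)) := by
          rw [← h5]; exact mul_le_mul' h3 h4
      _ = C'' * ρ ^ (d/2) * A := by ring
  have t2 : (∫⁻ x in Sᶜ, (‖f x‖₊ : ℝ≥0∞) ∂μ) ≤ ρ ^ (-(2*s)) * B := by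
    have hpt : ∀ x ∈ Sᶜ, (‖f x‖₊ : ℝ≥0∞)
        ≤ ρ ^ (-(2*s)) * ((‖x‖₊ : ℝ≥0∞) ^ (2*s) * (‖f x‖₊ : ℝ≥0∞)) := by
      intro x hx
      have hxr : r < ‖x‖ := by
        simp only [hS_def, Set.mem_compl_iff, Metric.mem_closedBall, dist_zero_right,
          not_le] at hx
        exact hx
      have hρx : ρ ^ (2*s) ≤ (‖x‖₊ : ℝ≥0∞) ^ (2*s) := by
        refine ENNReal.rpow_le_rpow ?_ (by positivity)
        rw [← hofr, ← ENNReal.ofReal_coe_nnreal, coe_nnnorm]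
        exact ENNReal.ofReal_le_ofReal hxr.le
      calc (‖f x‖₊ : ℝ≥0∞) = ρ ^ (-(2*s)) * ρ ^ (2*s) * (‖f x‖₊ : ℝ≥0∞) := by
            rw [← ENNReal.rpow_add _ _ hρ0 hρt]
            norm_num
        _ ≤ ρ ^ (-(2*s)) * (‖x‖₊ : ℝ≥0∞) ^ (2*s) * (‖f x‖₊ : ℝ≥0∞) := by
            gcongr
        _ = ρ ^ (-(2*s)) * ((‖x‖₊ : ℝ≥0∞) ^ (2*s) * (‖f x‖₊ : ℝ≥0∞)) := by
            ring
    have hfin : ρ ^ (-(2*s)) ≠ ∞ := by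
      rw [ENNReal.rpow_neg, ENNReal.inv_ne_top]
      exact (ENNReal.rpow_pos (hρ0.bot_lt) hρt).ne'
    calc (∫⁻ x in Sᶜ, (‖f x‖₊ : ℝ≥0∞) ∂μ)
        ≤ ∫⁻ x in Sᶜ, ρ ^ (-(2*s)) * ((‖x‖₊ : ℝ≥0∞) ^ (2*s) * (‖f x‖₊ : ℝ≥0∞)) ∂μ :=
          setLIntegral_mono' hSmeas.compl hpt
      _ ≤ ∫⁻ x, ρ ^ (-(2*s)) * ((‖x‖₊ : ℝ≥0∞) ^ (2*s) * (‖f x‖₊ : ℝ≥0∞)) ∂μ :=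
          setLIntegral_le_lintegral _ _
      _ = ρ ^ (-(2*s)) * B := lintegral_const_mul' _ _ hfin
  calc eLpNorm f 1 μ = (∫⁻ x in S, (‖f x‖₊ : ℝ≥0∞) ∂μ) + ∫⁻ x in Sᶜ, (‖f x‖₊ : ℝ≥0∞) ∂μ :=
        hsplit
    _ ≤ C'' * ρ ^ (d/2) * A + ρ ^ (-(2*s)) * B := add_le_add t1 t2
end

section
/- Matolcsi–Szücs uncertainty principle (the case k ≡ 0, a = 2 of the paper's Proposition): let N ≥ 1 and let f ∈ L¹(ℝ^N) ∩ L²(ℝ^N) be not almost everywhere zero. Then Leb({x ∈ ℝ^N : f(x) ≠ 0}) · Leb({ξ ∈ ℝ^N : 𝓕f(ξ) ≠ 0}) ≥ 1, the product being taken in [0,∞]. -/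
open MeasureTheory ENNReal Filter Complex
open scoped FourierTransform RealInnerProductSpace ContDiff

section Aux

variable {V : Type*} [NormedAddCommGroup V] [InnerProductSpace ℝ V]
  [MeasurableSpace V] [BorelSpace V] [FiniteDimensional ℝ V]

/-- A smooth compactly supported function is a Schwartz map. -/
noncomputable def ofCompactSupportAux {E : Type*} [NormedAddCommGroup E] [NormedSpace ℝ E]
    {f : V → E} (hf : ContDiff ℝ ∞ f) (h'f : HasCompactSupport f) : SchwartzMap V E where
  toFun := f
  smooth' := hf
  decay' := by
    intro k n
    obtain ⟨C, hC⟩ := Continuous.bounded_above_of_compact_support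
      (f := fun x : V => ‖x‖ ^ k * ‖iteratedFDeriv ℝ n f x‖)
      (((continuous_norm.comp continuous_id).pow k).mul
        ((hf.continuous_iteratedFDeriv (by exact_mod_cast le_top)).norm))
      (((h'f.iteratedFDeriv n).norm).mul_left)
    refine ⟨C, fun x => ?_⟩
    have h := hC x
    rwa [Real.norm_eq_abs, _root_.abs_of_nonneg (by positivity)] at h

lemma real_fourier_continuous {f : V → ℂ} (hf : Integrable f volume) :
    Continuous (𝓕 f) :=
  VectorFourier.fourierIntegral_continuous Real.continuous_fourierChar continuous_inner hf

lemma real_fourier_norm_le {f : V → ℂ} (w : V) :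
    ‖𝓕 f w‖ ≤ ∫ x, ‖f x‖ :=
  VectorFourier.norm_fourierIntegral_le_integral_norm _ _ _ _ _

lemma innerl_flip : (innerₗ V).flip = innerₗ V := by
  apply LinearMap.ext; intro v; apply LinearMap.ext; intro w
  exact real_inner_comm v w

/-- Multiplication formula specialised to the real Fourier transform. -/
lemma real_mult_formula {f g : V → ℂ} (hf : Integrable f volume) (hg : Integrable g volume) :
    ∫ ξ, 𝓕 f ξ • g ξ = ∫ x, f x • 𝓕 g x := by
  have := VectorFourier.integral_fourierIntegral_smul_eq_flip (L := innerₗ V)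
    Real.continuous_fourierChar continuous_inner hf hg
  rw [innerl_flip] at this
  exact this

/-- A.e. Fourier inversion for integrable functions with integrable Fourier transform. -/
lemma ae_fourier_inversion {f : V → ℂ} (hf : Integrable f volume)
    (h'f : Integrable (𝓕 f) volume) :
    f =ᵐ[volume] 𝓕⁻ (𝓕 f) := by
  have hgc : Continuous (𝓕⁻ (𝓕 f)) := by
    have h : 𝓕⁻ (𝓕 f) = fun v => 𝓕 (𝓕 f) (-v) := by
      funext v; exact Real.fourierInv_eq_fourier_neg _ v
    rw [h]
    exact (real_fourier_continuous h'f).comp continuous_neg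
  apply ae_eq_of_integral_contDiff_smul_eq hf.locallyIntegrable hgc.locallyIntegrable
  intro φ hφ hφc
  set Φ : V → ℂ := fun x => (φ x : ℂ) with hΦdef
  have hΦsmooth : ContDiff ℝ ∞ Φ := Complex.ofRealCLM.contDiff.comp hφ
  have hΦc : HasCompactSupport Φ := hφc.comp_left (g := fun r : ℝ => (r : ℂ)) Complex.ofReal_zero
  have hΦcont : Continuous Φ := hΦsmooth.continuous
  set S : SchwartzMap V ℂ := ofCompactSupportAux hΦsmooth hΦc with hSdef
  have hΦint : Integrable Φ volume := S.integrable
  have hFΦint : Integrable (𝓕 Φ) volume := by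
    have h := (SchwartzMap.fourierTransformCLM ℂ S).integrable (μ := volume)
    exact h
  have hA_mp := (LinearIsometryEquiv.neg ℝ (E := V)).measurePreserving
  have hA_emb := (LinearIsometryEquiv.neg ℝ (E := V)).toHomeomorph.measurableEmbedding
  have hΦnegint : Integrable (fun x => Φ (-x)) volume :=
    (hA_mp.integrable_comp_emb hA_emb).mpr hΦint
  have hFΦneg : 𝓕 (fun x => Φ (-x)) = 𝓕⁻ Φ :=
    (Real.fourierInv_eq_fourier_comp_neg Φ).symm
  have hFΦinvint : Integrable (𝓕⁻ Φ) volume := by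
    have h : 𝓕⁻ Φ = fun v => 𝓕 Φ (-v) := by
      funext v; exact Real.fourierInv_eq_fourier_neg _ v
    rw [h]
    exact (hA_mp.integrable_comp_emb hA_emb).mpr hFΦint
  have key1 : ∫ ξ, 𝓕 f ξ • 𝓕⁻ Φ ξ = ∫ x, f x • Φ x := by
    rw [real_mult_formula hf hFΦinvint]
    congr 1
    funext x
    rw [Continuous.fourier_fourierInv_eq hΦcont hΦint hFΦint]
  have key2 : ∫ ξ, 𝓕 (𝓕 f) ξ • Φ (-ξ) = ∫ x, 𝓕 f x • 𝓕⁻ Φ x := by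
    have h := real_mult_formula h'f hΦnegint
    rw [hFΦneg] at h
    exact h
  have lhs_eq : ∫ x, φ x • f x = ∫ x, f x • Φ x := by
    congr 1; funext x
    simp only [hΦdef, Complex.real_smul, smul_eq_mul]
    ring
  have rhs_eq : ∫ x, φ x • 𝓕⁻ (𝓕 f) x = ∫ ξ, 𝓕 (𝓕 f) ξ • Φ (-ξ) := by
    have hcomp : (fun ξ => 𝓕 (𝓕 f) ξ • Φ (-ξ))
        = fun ξ => (fun v => φ v • 𝓕⁻ (𝓕 f) v) ((LinearIsometryEquiv.neg ℝ (E := V)) ξ) := by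
      funext ξ
      show 𝓕 (𝓕 f) ξ • Φ (-ξ) = φ (-ξ) • 𝓕⁻ (𝓕 f) (-ξ)
      rw [Real.fourierInv_eq_fourier_neg, neg_neg]
      simp only [hΦdef, Complex.real_smul, smul_eq_mul]
      ring
    rw [hcomp]
    exact (hA_mp.integral_comp hA_emb _).symm
  rw [lhs_eq, rhs_eq, key2, key1]

end Aux

/-- **Matolcsi–Szücs uncertainty principle** (case `k ≡ 0`, `a = 2`): if `f ∈ L¹ ∩ L²`
is not almost everywhere zero, then
`Leb {x : f x ≠ 0} · Leb {ξ : 𝓕f(ξ) ≠ 0} ≥ 1` (the product taken in `[0,∞]`). -/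
theorem matolcsi_szucs
    (N : ℕ) (hN : 1 ≤ N) (f : EuclideanSpace ℝ (Fin N) → ℂ)
    (hf1 : MemLp f 1 volume) (hf2 : MemLp f 2 volume)
    (hne : ¬ f =ᵐ[volume] 0) :
    1 ≤ volume {x | f x ≠ 0} * volume {ξ | FourierTransform.fourier f ξ ≠ 0} := by
  classical
  have hfInt : Integrable f volume := memLp_one_iff_integrable.mp hf1
  -- replace f by a strongly measurable representative g
  set g : EuclideanSpace ℝ (Fin N) → ℂ := hfInt.1.mk f with hgdef
  have hfg : f =ᵐ[volume] g := hfInt.1.ae_eq_mk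
  have hgm : StronglyMeasurable g := hfInt.1.stronglyMeasurable_mk
  have hgInt : Integrable g volume := hfInt.congr hfg
  have hFeq : FourierTransform.fourier f = FourierTransform.fourier g := by
    funext w
    rw [Real.fourier_eq, Real.fourier_eq]
    exact integral_congr_ae (hfg.mono fun x hx => by simp only [hx])
  have hvol : volume {x | f x ≠ 0} = volume {x | g x ≠ 0} :=
    measure_congr (hfg.mono fun x hx => by
      show (¬ f x = 0) = (¬ g x = 0)
      rw [hx])
  have hgne : ¬ g =ᵐ[volume] 0 := fun h => hne (hfg.trans h)
  rw [hvol, hFeq]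
  -- main argument for g
  by_contra hlt
  push_neg at hlt
  set A : Set (EuclideanSpace ℝ (Fin N)) := {x | g x ≠ 0} with hAdef
  set B : Set (EuclideanSpace ℝ (Fin N)) := {ξ | 𝓕 g ξ ≠ 0} with hBdef
  have hAm : MeasurableSet A := hgm.measurable (measurableSet_singleton (0:ℂ)).compl
  have hFcont : Continuous (𝓕 g) := real_fourier_continuous hgInt
  have hBm : MeasurableSet B := hFcont.measurable (measurableSet_singleton (0:ℂ)).compl
  have hA0 : volume A ≠ 0 := fun h => hgne (ae_iff.mpr h)
  have hBfin : volume B ≠ ⊤ := by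
    intro h
    rcases eq_or_ne (volume A) 0 with h0 | h0
    · exact hA0 h0
    · rw [h, ENNReal.mul_top h0] at hlt
      exact absurd hlt (by simp)
  set C := ∫ x, ‖g x‖ with hCdef
  have hCnn : 0 ≤ C := integral_nonneg fun x => norm_nonneg _
  have hC0 : 0 < C := by
    rcases hCnn.lt_or_eq with h | h
    · exact h
    · exfalso
      apply hgne
      have h2 := (integral_eq_zero_iff_of_nonneg (fun x => norm_nonneg (g x)) hgInt.norm).mp h.symm
      filter_upwards [h2] with x hx
      simpa using hx
  have hFbound : ∀ ξ, ‖𝓕 g ξ‖ ≤ C := fun ξ => real_fourier_norm_le ξ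
  have hFInt : Integrable (𝓕 g) volume := by
    apply Integrable.mono' (g := B.indicator fun _ => C)
    · exact (integrable_indicator_iff hBm).mpr (integrableOn_const hBfin)
    · exact hFcont.aestronglyMeasurable
    · filter_upwards with ξ
      by_cases hξ : ξ ∈ B
      · rw [Set.indicator_of_mem hξ]; exact hFbound ξ
      · rw [Set.indicator_of_notMem hξ]
        simp only [hBdef, Set.mem_setOf_eq, not_not] at hξ
        simp [hξ]
  have hinv : g =ᵐ[volume] 𝓕⁻ (𝓕 g) := ae_fourier_inversion hgInt hFInt
  have hB0 : volume B ≠ 0 := by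
    intro h
    have hF0 : 𝓕 g =ᵐ[volume] 0 := ae_iff.mpr h
    have hF0' : 𝓕 g = 0 :=
      (Continuous.ae_eq_iff_eq volume hFcont continuous_const).mp hF0
    apply hgne
    refine hinv.trans ?_
    rw [hF0']
    have hz : 𝓕⁻ (0 : EuclideanSpace ℝ (Fin N) → ℂ) = 0 := by
      funext w; simp [Real.fourierInv_eq]
    rw [hz]
  have hAfin : volume A ≠ ⊤ := by
    intro h
    rw [h, ENNReal.top_mul hB0] at hlt
    exact absurd hlt (by simp)
  set D := ∫ ξ, ‖𝓕 g ξ‖ with hDdef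
  have hD_le : D ≤ C * (volume B).toReal := by
    have h1 : D = ∫ ξ in B, ‖𝓕 g ξ‖ := (setIntegral_eq_integral_of_forall_compl_eq_zero
      (fun ξ hξ => by
        simp only [hBdef, Set.mem_setOf_eq, not_not] at hξ
        simp [hξ])).symm
    rw [h1]
    have h2 := norm_setIntegral_le_of_norm_le_const (μ := volume) (s := B)
      (f := fun ξ => ‖𝓕 g ξ‖) hBfin.lt_top
      (fun ξ _ => by rw [Real.norm_eq_abs, _root_.abs_of_nonneg (norm_nonneg _)]; exact hFbound ξ)
    exact (le_abs_self _).trans h2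
  have hgbound : ∀ v, ‖𝓕⁻ (𝓕 g) v‖ ≤ D := by
    intro v
    rw [Real.fourierInv_eq_fourier_neg]
    exact real_fourier_norm_le _
  have hC_le : C ≤ D * (volume A).toReal := by
    have h1 : C = ∫ x in A, ‖g x‖ := (setIntegral_eq_integral_of_forall_compl_eq_zero
      (fun x hx => by
        simp only [hAdef, Set.mem_setOf_eq, not_not] at hx
        simp [hx])).symm
    rw [h1]
    have hae : ∀ᵐ x ∂(volume : Measure (EuclideanSpace ℝ (Fin N))), x ∈ A → ‖‖g x‖‖ ≤ D := by
      filter_upwards [hinv] with x hx _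
      rw [Real.norm_eq_abs, _root_.abs_of_nonneg (norm_nonneg _), hx]
      exact hgbound x
    have h2 := norm_setIntegral_le_of_norm_le_const_ae' (μ := volume) (s := A)
      (f := fun x => ‖g x‖) hAfin.lt_top hae
    exact (le_abs_self _).trans h2
  have hchain : C ≤ C * ((volume B).toReal * (volume A).toReal) := by
    calc C ≤ D * (volume A).toReal := hC_le
    _ ≤ C * (volume B).toReal * (volume A).toReal :=
      mul_le_mul_of_nonneg_right hD_le ENNReal.toReal_nonneg
    _ = C * ((volume B).toReal * (volume A).toReal) := by ring
  have h1le : (1:ℝ) ≤ (volume B).toReal * (volume A).toReal := by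
    have := hchain
    rw [show C = C * 1 by ring] at this
    exact le_of_mul_le_mul_left (by simpa using hchain) hC0
  have hfin : volume A * volume B ≠ ⊤ := ENNReal.mul_ne_top hAfin hBfin
  have hlt' : (volume A * volume B).toReal < 1 := by
    have := (ENNReal.toReal_lt_toReal hfin ENNReal.one_ne_top).mpr hlt
    simpa using this
  rw [ENNReal.toReal_mul] at hlt'
  nlinarith [h1le, hlt']
end
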